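/- arXiv:2509.01779 — 10 statements merged into one kernel-verified Lean document; each statement's English description precedes it below -/
import Mathlib

section
/- Let A be a simple Artinian ring and M a finitely generated semisimple A-module. Then the natural map from A to the endomorphism ring of M viewed as a module over End_A(M) is an isomorphism (double centralizer theorem for semisimple modules). -/
/-!
Since `A` is simple, its action on the nonzero module `M` is faithful, so the natural map is
injective. Since `A` is Artinian, finitely many `m₁, …, mₖ ∈ M` already have zero common
annihilator, so `a ↦ (a • mᵢ)ᵢ` embeds `A` into `Mᵏ`. As `A` is semisimple this embedding splits,
and a retraction `π : Mᵏ → A` writes every `m = π (mᵢ)ᵢ • m` as an `End_A(M)`-combination of the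
`mᵢ`. So `M` is finite over `End_A(M)`, and the Jacobson density theorem gives surjectivity.
-/

section

variable {A M : Type*} [Ring A] [AddCommGroup M] [Module A M]

theorem exists_finset_forall_smul_eq_zero_imp_eq_zero [IsArtinianRing A] [FaithfulSMul A M] :
    ∃ s : Finset M, ∀ a : A, (∀ m ∈ s, a • m = 0) → a = 0 := by
  classical
  let ann (s : Finset M) : Submodule A A :=
    ⨅ m ∈ s, LinearMap.ker (LinearMap.toSpanSingleton A M m)
  have mem_ann {s : Finset M} {a : A} : a ∈ ann s ↔ ∀ m ∈ s, a • m = 0 := by simp [ann]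
  obtain ⟨_, ⟨s, rfl⟩, hmin⟩ := IsArtinian.set_has_minimal (Set.range ann) ⟨_, ∅, rfl⟩
  refine ⟨s, fun a ha => eq_of_smul_eq_smul (α := M) fun m => ?_⟩
  have hle : ann (insert m s) ≤ ann s := fun b hb =>
    mem_ann.2 fun n hn => mem_ann.1 hb n (Finset.mem_insert_of_mem hn)
  have heq : ann (insert m s) = ann s := hle.eq_of_not_lt (hmin _ ⟨_, rfl⟩)
  rw [zero_smul]
  exact mem_ann.1 (heq ▸ mem_ann.2 ha) m (Finset.mem_insert_self m s)

theorem Module.End.span_range_eq_top_of_apply_eq_one {ι : Type*} [Finite ι] (v : ι → M)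
    (π : (ι → M) →ₗ[A] A) (hπ : π v = 1) :
    Submodule.span (Module.End A M) (Set.range v) = ⊤ := by
  classical
  have := Fintype.ofFinite ι
  refine eq_top_iff.2 fun m _ => ?_
  have hm : m = ∑ i, (LinearMap.toSpanSingleton A M m ∘ₗ π ∘ₗ LinearMap.single A _ i) • v i := by
    simp only [Module.End.smul_def, LinearMap.comp_apply, LinearMap.toSpanSingleton_apply,
      ← Finset.sum_smul, ← map_sum, LinearMap.single_apply, Finset.univ_sum_single, hπ, one_smul]
  rw [hm]
  exact Submodule.sum_mem _ fun i _ => Submodule.smul_mem _ _ (Submodule.subset_span ⟨i, rfl⟩)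

theorem Module.Finite.moduleEnd_of_faithfulSMul [IsSemisimpleRing A] [FaithfulSMul A M] :
    Module.Finite (Module.End A M) M := by
  obtain ⟨s, hs⟩ := exists_finset_forall_smul_eq_zero_imp_eq_zero (A := A) (M := M)
  let f : A →ₗ[A] (s → M) := LinearMap.pi fun m => LinearMap.toSpanSingleton A M m
  have hf : Function.Injective f := by
    refine (injective_iff_map_eq_zero f).2 fun a ha => hs a fun m hm => ?_
    simpa [f] using congrFun ha ⟨m, hm⟩
  obtain ⟨π, hπ⟩ := IsSemisimpleModule.extension_property f hf LinearMap.id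
  have hf1 : f 1 = fun m : s => (m : M) := by ext; simp [f]
  have hπv : π (fun m : s => (m : M)) = 1 := by rw [← hf1]; exact LinearMap.congr_fun hπ 1
  exact ⟨Submodule.fg_def.2
    ⟨_, Set.finite_range _, Module.End.span_range_eq_top_of_apply_eq_one _ π hπv⟩⟩

end

theorem stmt2_general (A M : Type*) [Ring A] [IsSimpleRing A] [IsArtinianRing A]
    [AddCommGroup M] [Module A M] [Nontrivial M] :
    Function.Bijective (Module.toModuleEnd (Module.End A M) M (S := A)) := by
  have hinj : Function.Injective (Module.toModuleEnd (Module.End A M) M (S := A)) :=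
    RingHom.injective _
  have : FaithfulSMul A M := ⟨fun h => hinj (LinearMap.ext h)⟩
  have : Module.Finite (Module.End A M) M := .moduleEnd_of_faithfulSMul
  exact ⟨hinj, Module.Finite.toModuleEnd_moduleEnd_surjective⟩

/-- Double Centralizer Theorem for semisimple modules: if `A` is a simple Artinian
ring and `M` a nonzero finitely generated semisimple `A`-module, then the natural
map `A → End_{End_A(M)}(M)` is bijective. -/
theorem stmt2 (A M : Type*) [Ring A] [IsSimpleRing A] [IsArtinianRing A]
    [AddCommGroup M] [Module A M] [Module.Finite A M] [IsSemisimpleModule A M]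
    [Nontrivial M] :
    Function.Bijective (Module.toModuleEnd (Module.End A M) M (S := A)) :=
  stmt2_general A M
end

section
/- Let L/K be a finite field extension and B a subalgebra of End_K(L) containing L (via left multiplications). Then B is a simple ring. -/
set_option maxHeartbeats 2000000
set_option synthInstance.maxHeartbeats 400000

/-- Any subalgebra of `End_K(L)` containing `L` (via left multiplications) is a
simple ring, for a finite field extension `L/K`. -/
theorem stmt7 (K L : Type*) [Field K] [Field L] [Algebra K L] [FiniteDimensional K L]
    (B : Subalgebra K (Module.End K L)) (hB : (Algebra.lmul K L).range ≤ B) :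
    IsSimpleRing B := by
  classical
  set e := Algebra.lmul K L with he
  have heB : ∀ a : L, e a ∈ B := fun a => hB ⟨a, rfl⟩
  have heval : ∀ a x : L, e a x = a * x := fun a x => rfl
  -- the commutant subfield `F`
  have inv_mem : ∀ c ∈ (Subalgebra.centralizer K (B : Set (Module.End K L))).comap e,
      c⁻¹ ∈ (Subalgebra.centralizer K (B : Set (Module.End K L))).comap e := by
    intro c hc
    rcases eq_or_ne c 0 with rfl | hc0
    · simpa using hc
    rw [Subalgebra.mem_comap, Subalgebra.mem_centralizer_iff] at hc ⊢
    intro b hb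
    have h1 : e c⁻¹ * e c = 1 := by rw [← map_mul, inv_mul_cancel₀ hc0, map_one]
    have h2 : e c * e c⁻¹ = 1 := by rw [← map_mul, mul_inv_cancel₀ hc0, map_one]
    calc b * e c⁻¹ = e c⁻¹ * e c * b * e c⁻¹ := by rw [h1, one_mul]
      _ = e c⁻¹ * (b * e c) * e c⁻¹ := by rw [mul_assoc (e c⁻¹), ← hc b hb]
      _ = e c⁻¹ * b * (e c * e c⁻¹) := by simp only [mul_assoc]
      _ = e c⁻¹ * b := by rw [h2, mul_one]
  set F : IntermediateField K L :=
    ((Subalgebra.centralizer K (B : Set (Module.End K L))).comap e).toIntermediateField inv_mem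
    with hFdef
  have hmemF : ∀ c : L, c ∈ F ↔ ∀ b ∈ B, b * e c = e c * b := by
    intro c
    constructor
    · intro hc
      have : e c ∈ Subalgebra.centralizer K (B : Set (Module.End K L)) :=
        (Subalgebra.mem_comap _ _ _).1 hc
      exact (Subalgebra.mem_centralizer_iff K).1 this
    · intro hc
      exact (Subalgebra.mem_comap _ _ _).2 ((Subalgebra.mem_centralizer_iff K).2 hc)
  have hsmul : ∀ (c : F) (x : L), c • x = (c : L) * x := fun c x => by
    rw [Algebra.smul_def]; rfl
  have hFlin : ∀ b ∈ B, ∀ (c : F) (x : L), b (c • x) = c • b x := by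
    intro b hb c x
    rw [hsmul, hsmul, ← heval, ← heval, ← Module.End.mul_apply, ← Module.End.mul_apply,
      (hmemF c).1 c.2 b hb]
  -- a member of B vanishing on a set vanishes on its F-span
  have hkills : ∀ b ∈ B, ∀ s : Set L, (∀ v ∈ s, b v = 0) →
      ∀ v ∈ Submodule.span F s, b v = 0 := by
    intro b hb s hs v hv
    induction hv using Submodule.span_induction with
    | mem x hx => exact hs x hx
    | zero => exact map_zero b
    | add x y _ _ hx hy => rw [map_add, hx, hy, add_zero]
    | smul c x _ hx => rw [hFlin b hb, hx, smul_zero]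
  -- density-type key lemma
  have key : ∀ s : Finset L, ∀ x : L, x ∉ Submodule.span F (s : Set L) →
      ∃ b ∈ B, (∀ v ∈ Submodule.span F (s : Set L), b v = 0) ∧ b x ≠ 0 := by
    intro s
    induction s using Finset.induction_on with
    | empty =>
      intro x hx
      have hx0 : x ≠ 0 := by
        intro h; exact hx (h ▸ Submodule.zero_mem _)
      refine ⟨e x⁻¹, heB _, ?_, ?_⟩
      · intro v hv
        rw [Finset.coe_empty, Submodule.span_empty, Submodule.mem_bot] at hv
        rw [hv, map_zero]
      · rw [heval, inv_mul_cancel₀ hx0]; exact one_ne_zero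
    | @insert w t hwt ih =>
      intro x hx
      rw [Finset.coe_insert] at hx
      by_cases hws : w ∈ Submodule.span F (t : Set L)
      · rw [Submodule.span_insert_eq_span hws] at hx
        obtain ⟨b, hb, h1, h2⟩ := ih x hx
        refine ⟨b, hb, ?_, h2⟩
        rw [Finset.coe_insert, Submodule.span_insert_eq_span hws]
        exact h1
      · by_contra hcon
        push_neg at hcon
        rw [Finset.coe_insert] at hcon
        have H : ∀ b ∈ B, (∀ v ∈ Submodule.span F (insert w (t : Set L)), b v = 0) →
            b x = 0 := fun b hb h1 => hcon b hb h1
        have ihc : ∀ z : L, (∀ b ∈ B, (∀ v ∈ Submodule.span F (t : Set L), b v = 0) →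
            b z = 0) → z ∈ Submodule.span F (t : Set L) := by
          intro z hz
          by_contra hzs
          obtain ⟨b, hb, h1, h2⟩ := ih z hzs
          exact h2 (hz b hb h1)
        obtain ⟨b₁, hb₁B, hb₁t, hb₁w⟩ := ih w hws
        set b₀ : Module.End K L := e (b₁ w)⁻¹ * b₁ with hb₀def
        have hb₀B : b₀ ∈ B := mul_mem (heB _) hb₁B
        have hb₀t : ∀ v ∈ Submodule.span F (t : Set L), b₀ v = 0 := by
          intro v hv
          rw [hb₀def, Module.End.mul_apply, hb₁t v hv, map_zero]
        have hb₀w : b₀ w = 1 := by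
          rw [hb₀def, Module.End.mul_apply, heval, inv_mul_cancel₀ hb₁w]
        set c : L := b₀ x with hcdef
        -- (†)
        have dagger : ∀ b ∈ B, (∀ v ∈ Submodule.span F (t : Set L), b v = 0) →
            b x = b w * c := by
          intro b hbB hbt
          set b' : Module.End K L := b - e (b w) * b₀ with hb'def
          have hb'B : b' ∈ B := sub_mem hbB (mul_mem (heB _) hb₀B)
          have hb'set : ∀ v ∈ insert w (t : Set L), b' v = 0 := by
            intro v hv
            rcases hv with rfl | hv
            · rw [hb'def, LinearMap.sub_apply, Module.End.mul_apply, hb₀w, heval,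
                mul_one, sub_self]
            · rw [hb'def, LinearMap.sub_apply, Module.End.mul_apply,
                hbt v (Submodule.subset_span hv), hb₀t v (Submodule.subset_span hv),
                map_zero, sub_zero]
          have := H b' hb'B (hkills b' hb'B _ hb'set)
          rw [hb'def, LinearMap.sub_apply, Module.End.mul_apply, heval, sub_eq_zero] at this
          exact this
        -- c centralizes B
        have hcF : c ∈ F := by
          rw [hmemF]
          intro b'' hb''
          ext u
          set b : Module.End K L := e u * b₀ with hbdef
          have hbB : b ∈ B := mul_mem (heB _) hb₀B
          have hbt : ∀ v ∈ Submodule.span F (t : Set L), b v = 0 := by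
            intro v hv
            rw [hbdef, Module.End.mul_apply, hb₀t v hv, map_zero]
          have hbw : b w = u := by rw [hbdef, Module.End.mul_apply, hb₀w, heval, mul_one]
          have h1 : b x = u * c := by rw [dagger b hbB hbt, hbw]
          have hbbB : b'' * b ∈ B := mul_mem hb'' hbB
          have hbbt : ∀ v ∈ Submodule.span F (t : Set L), (b'' * b) v = 0 := by
            intro v hv
            rw [Module.End.mul_apply, hbt v hv, map_zero]
          have h2 := dagger _ hbbB hbbt
          have e1 : (b'' * b) x = b'' (u * c) := by
            rw [Module.End.mul_apply, h1]
          have e2 : (b'' * b) w = b'' u := by rw [Module.End.mul_apply, hbw]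
          rw [e1, e2] at h2
          rw [Module.End.mul_apply, Module.End.mul_apply, heval, heval, mul_comm c u, h2,
            mul_comm (b'' u) c]
        -- conclude x ∈ span (insert w t), contradiction
        have hz : ∀ b ∈ B, (∀ v ∈ Submodule.span F (t : Set L), b v = 0) →
            b (x - (⟨c, hcF⟩ : F) • w) = 0 := by
          intro b hbB hbt
          rw [map_sub, hFlin b hbB, dagger b hbB hbt, hsmul, mul_comm c (b w), sub_self]
        have hmem := ihc _ hz
        have : x ∈ Submodule.span F (insert w (t : Set L)) := by
          have h1 : x = (x - (⟨c, hcF⟩ : F) • w) + (⟨c, hcF⟩ : F) • w := by ring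
          rw [h1]
          exact Submodule.add_mem _
            (Submodule.span_mono (Set.subset_insert w _) hmem)
            (Submodule.smul_mem _ _ (Submodule.subset_span (Set.mem_insert w _)))
        exact hx this
  -- now prove simplicity
  haveI : Nontrivial (Module.End K L) := by
    refine ⟨1, 0, fun h => ?_⟩
    have := LinearMap.ext_iff.1 h 1
    simp at this
  haveI : Nontrivial B := by
    refine ⟨1, 0, fun h => ?_⟩
    have : (1 : Module.End K L) = 0 := congrArg Subtype.val h
    exact one_ne_zero this
  constructor
  constructor
  intro I
  rcases eq_or_ne I ⊥ with h | hI
  · exact Or.inl h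
  right
  -- find a nonzero element of I
  have : ∃ f : B, f ∈ I ∧ f ≠ 0 := by
    by_contra h
    push_neg at h
    exact hI (eq_bot_iff.2 fun x hx => (TwoSidedIdeal.mem_bot _).2 (h x hx))
  obtain ⟨f, hfI, hf0⟩ := this
  have hfe : (f : Module.End K L) ≠ 0 := fun h => hf0 (Subtype.ext h)
  have : ∃ z : L, (f : Module.End K L) z ≠ 0 := by
    by_contra h
    push_neg at h
    exact hfe (LinearMap.ext fun z => by rw [h z, LinearMap.zero_apply])
  obtain ⟨z, hz⟩ := this
  haveI : FiniteDimensional F L := IntermediateField.finiteDimensional_right F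
  set n := Module.finrank F L with hn
  set bs := Module.finBasis F L with hbs
  have hbase : ∀ i : Fin n, ∃ b ∈ B,
      (∀ v ∈ Submodule.span F ((((Finset.univ.erase i).image bs) : Finset L) : Set L), b v = 0)
      ∧ b (bs i) ≠ 0 := by
    intro i
    apply key
    have hni : i ∉ ((Finset.univ.erase i : Finset (Fin n)) : Set (Fin n)) := by simp
    have := bs.linearIndependent.notMem_span_image (R := F) hni
    rw [Finset.coe_image]
    exact this
  choose p hpB hpt hpx using hbase
  -- build the elements r i of I
  set r : Fin n → Module.End K L := fun i =>
    e (bs i * ((f : Module.End K L) z)⁻¹) * (f : Module.End K L) *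
      (e (z * (p i (bs i))⁻¹) * p i) with hrdef
  have hrB : ∀ i, r i ∈ B := fun i =>
    mul_mem (mul_mem (heB _) f.2) (mul_mem (heB _) (hpB i))
  have hrI : ∀ i, (⟨r i, hrB i⟩ : B) ∈ I := by
    intro i
    have h1 : (⟨r i, hrB i⟩ : B) =
        ⟨e (bs i * ((f : Module.End K L) z)⁻¹), heB _⟩ * f *
          ⟨e (z * (p i (bs i))⁻¹) * p i, mul_mem (heB _) (hpB i)⟩ := by
      rfl
    rw [h1]
    exact I.mul_mem_right _ _ (I.mul_mem_left _ _ hfI)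
  have hrapp : ∀ i j : Fin n, r i (bs j) = if j = i then bs i else 0 := by
    intro i j
    by_cases hij : j = i
    · subst hij
      simp only [if_pos rfl]
      rw [hrdef]
      simp only [Module.End.mul_apply]
      rw [heval, heval, mul_assoc z, inv_mul_cancel₀ (hpx j), mul_one, mul_assoc,
        inv_mul_cancel₀ hz, mul_one]
      simp
    · simp only [if_neg hij]
      have hj0 : p i (bs j) = 0 := by
        apply hpt i
        apply Submodule.subset_span
        rw [Finset.coe_image]
        exact ⟨j, by simp [Finset.mem_erase, hij], rfl⟩
      rw [hrdef]
      simp only [Module.End.mul_apply]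
      rw [hj0, map_zero, map_zero, map_zero]
  -- the sum is 1
  set g : B := ∑ i : Fin n, (⟨r i, hrB i⟩ : B) with hgdef
  have hgI : g ∈ I := by
    rw [hgdef]
    exact sum_mem fun i _ => hrI i
  have hgcoe : (g : Module.End K L) = ∑ i : Fin n, r i := by
    rw [hgdef]
    exact map_sum B.val _ _
  have hgbasis : ∀ j : Fin n, (g : Module.End K L) (bs j) = bs j := by
    intro j
    rw [hgcoe, LinearMap.sum_apply]
    rw [Finset.sum_eq_single j]
    · rw [hrapp j j, if_pos rfl]
    · intro i _ hij
      rw [hrapp i j, if_neg (fun h => hij h.symm)]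
    · intro h
      exact absurd (Finset.mem_univ j) h
  have hg1 : g = 1 := by
    apply Subtype.ext
    apply LinearMap.ext
    intro x
    conv_lhs => rw [← bs.sum_repr x]
    rw [map_sum]
    have : ∀ j : Fin n, (g : Module.End K L) (bs.repr x j • bs j) = bs.repr x j • bs j := by
      intro j
      rw [hFlin _ g.2, hgbasis j]
    rw [Finset.sum_congr rfl fun j _ => this j]
    rw [bs.sum_repr x]
    rfl
  exact I.eq_top (hg1 ▸ hgI)
end

section
/- Let L/K be a finite field extension with G = Aut_K(L). The subalgebra L ⋊ G = ⊕_{g ∈ G} L·g of End_K(L) equals End_{L^G}(L), where L^G is the fixed field of G; in particular L ⋊ G is a simple algebra with center L^G. -/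
/-!
The generators of `L ⋊ G` are `L^G`-linear, so `L ⋊ G` lies in the centralizer of `L^G`, which
is `End_{L^G}(L)` viewed inside `End_K(L)`. Conversely, the `|G|` automorphisms are `L`-linearly
independent in `End_{L^G}(L)` (Dedekind), a space of `L`-dimension `[L : L^G] = |G|` (Artin), so
they span it over `L` and `L ⋊ G = End_{L^G}(L)`, a matrix algebra over a field. A central element
commutes with all multiplications, hence is multiplication by `f 1`, and commuting with `G` forces
`f 1 ∈ L^G`.
-/

/-- The skew group algebra `L ⋊ Aut_K(L)`: the subalgebra of `End_K(L)` generated by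
the multiplication operators and the `K`-algebra automorphisms of `L`. -/
def skewGroupAlg (K L : Type*) [Field K] [Field L] [Algebra K L] :
    Subalgebra K (Module.End K L) :=
  Algebra.adjoin K (Set.range ⇑(Algebra.lmul K L) ∪
    Set.range fun g : L ≃ₐ[K] L => (g.toLinearMap : L →ₗ[K] L))

open Module IntermediateField

theorem Module.End.isSimpleRing (F V : Type*) [Field F] [AddCommGroup V] [Module F V]
    [FiniteDimensional F V] [Nontrivial V] : IsSimpleRing (Module.End F V) :=
  have : Nonempty (Fin (finrank F V)) := Fin.pos_iff_nonempty.mp finrank_pos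
  .of_ringEquiv (algEquivMatrix (finBasis F V)).symm.toRingEquiv inferInstance

section

variable {K L : Type*} [Field K] [Field L] [Algebra K L]

theorem Module.End.eq_lmul_of_commute {f : Module.End K L}
    (hf : ∀ a : L, Algebra.lmul K L a * f = f * Algebra.lmul K L a) :
    f = Algebra.lmul K L (f 1) := by
  ext x
  simpa [mul_comm x] using (LinearMap.congr_fun (hf x) 1).symm

namespace IntermediateField

variable (E : IntermediateField K L)

def endRestrictScalars : Module.End E L →ₐ[K] Module.End K L where
  toFun f := f.restrictScalars K
  map_one' := rfl
  map_mul' _ _ := rfl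
  map_zero' := rfl
  map_add' _ _ := rfl
  commutes' _ := rfl

theorem endRestrictScalars_injective : Function.Injective E.endRestrictScalars :=
  LinearMap.restrictScalars_injective K

theorem centralizer_lmul_eq_range :
    Subalgebra.centralizer K (Algebra.lmul K L '' E) = E.endRestrictScalars.range := by
  ext f
  rw [Subalgebra.mem_centralizer_iff, Set.forall_mem_image]
  constructor
  · intro hf
    refine ⟨{ f with map_smul' := fun c x => ?_ }, rfl⟩
    exact (LinearMap.congr_fun (hf c.2) x).symm
  · rintro ⟨f, rfl⟩ c hc
    ext x
    exact (f.map_smul (⟨c, hc⟩ : E) x).symm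

def fixedFieldAlgHom {H : Subgroup (L ≃ₐ[K] L)} (g : H) : L →ₐ[fixedField H] L :=
  { (g : L →+* L) with commutes' := fun c => c.2 g }

theorem span_fixedFieldAlgHom_eq_top [FiniteDimensional K L] (H : Subgroup (L ≃ₐ[K] L)) :
    Submodule.span L (Set.range fun g : H => (fixedFieldAlgHom g).toLinearMap) = ⊤ := by
  have hli : LinearIndependent L fun g : H => (fixedFieldAlgHom g).toLinearMap :=
    (linearIndependent_toLinearMap _ L L).comp fixedFieldAlgHom
      fun g g' h => Subtype.ext <| AlgEquiv.ext fun x => DFunLike.congr_fun h x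
  have := Fintype.ofFinite H
  apply Submodule.eq_top_of_finrank_eq
  rw [finrank_span_eq_card hli, finrank_linearMap_self, finrank_fixedField_eq_card,
    Nat.card_eq_fintype_card]

end IntermediateField

variable (K L)

theorem lmul_mem_skewGroupAlg (a : L) : Algebra.lmul K L a ∈ skewGroupAlg K L :=
  Algebra.subset_adjoin (.inl ⟨a, rfl⟩)

theorem toLinearMap_mem_skewGroupAlg (g : L ≃ₐ[K] L) : g.toLinearMap ∈ skewGroupAlg K L :=
  Algebra.subset_adjoin (.inr ⟨g, rfl⟩)

theorem skewGroupAlg_le_range :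
    skewGroupAlg K L ≤ (fixedField (⊤ : Subgroup (L ≃ₐ[K] L))).endRestrictScalars.range := by
  refine Algebra.adjoin_le ?_
  rintro _ (⟨a, rfl⟩ | ⟨g, rfl⟩)
  · exact ⟨Algebra.lmul _ L a, rfl⟩
  · exact ⟨(fixedFieldAlgHom (H := ⊤) ⟨g, Subgroup.mem_top g⟩).toLinearMap, rfl⟩

theorem range_le_skewGroupAlg [FiniteDimensional K L] :
    (fixedField (⊤ : Subgroup (L ≃ₐ[K] L))).endRestrictScalars.range ≤ skewGroupAlg K L := by
  rintro _ ⟨f, rfl⟩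
  have hf : f ∈ Submodule.span L
      (Set.range fun g : (⊤ : Subgroup (L ≃ₐ[K] L)) => (fixedFieldAlgHom g).toLinearMap) :=
    span_fixedFieldAlgHom_eq_top (⊤ : Subgroup (L ≃ₐ[K] L)) ▸ Submodule.mem_top
  induction hf using Submodule.span_induction with
  | mem _ hg =>
    obtain ⟨g, rfl⟩ := hg
    exact toLinearMap_mem_skewGroupAlg K L g
  | zero => rw [map_zero]; exact zero_mem _
  | add _ _ _ _ hf hf' => rw [map_add]; exact add_mem hf hf'
  | smul a f _ hf =>
    have hsmul :
        endRestrictScalars _ (a • f) = Algebra.lmul K L a * endRestrictScalars _ f := rfl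
    exact hsmul ▸ mul_mem (lmul_mem_skewGroupAlg K L a) hf

theorem skewGroupAlg_le_centralizer :
    skewGroupAlg K L ≤ Subalgebra.centralizer K
      (Algebra.lmul K L '' fixedField (⊤ : Subgroup (L ≃ₐ[K] L))) :=
  centralizer_lmul_eq_range (fixedField (⊤ : Subgroup (L ≃ₐ[K] L))) ▸ skewGroupAlg_le_range K L

theorem skewGroupAlg_eq_range [FiniteDimensional K L] :
    skewGroupAlg K L = (fixedField (⊤ : Subgroup (L ≃ₐ[K] L))).endRestrictScalars.range :=
  le_antisymm (skewGroupAlg_le_range K L) (range_le_skewGroupAlg K L)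

noncomputable def skewGroupAlgEquivEnd [FiniteDimensional K L] :
    skewGroupAlg K L ≃ₐ[K] Module.End (fixedField (⊤ : Subgroup (L ≃ₐ[K] L))) L :=
  (Subalgebra.equivOfEq _ _ (skewGroupAlg_eq_range K L)).trans
    (AlgEquiv.ofInjective _ (endRestrictScalars_injective _)).symm

theorem isSimpleRing_skewGroupAlg [FiniteDimensional K L] : IsSimpleRing (skewGroupAlg K L) :=
  .of_ringEquiv (skewGroupAlgEquivEnd K L).symm.toRingEquiv (Module.End.isSimpleRing _ L)

theorem center_skewGroupAlg :
    {f : Module.End K L | f ∈ skewGroupAlg K L ∧ ∀ g ∈ skewGroupAlg K L, f * g = g * f} =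
      Algebra.lmul K L '' fixedField (⊤ : Subgroup (L ≃ₐ[K] L)) := by
  ext f
  constructor
  · rintro ⟨-, hcomm⟩
    have hf : f = Algebra.lmul K L (f 1) := Module.End.eq_lmul_of_commute fun a =>
      (hcomm _ (lmul_mem_skewGroupAlg K L a)).symm
    refine ⟨f 1, (mem_fixedField_iff _ _).mpr fun g _ => ?_, hf.symm⟩
    simpa using (LinearMap.congr_fun (hcomm _ (toLinearMap_mem_skewGroupAlg K L g)) 1).symm
  · rintro ⟨c, hc, rfl⟩
    exact ⟨lmul_mem_skewGroupAlg K L c,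
      fun g hg => skewGroupAlg_le_centralizer K L hg _ ⟨c, hc, rfl⟩⟩

end

/-- For a finite extension `L/K` with `G = Aut_K(L)`, the skew group algebra
`L ⋊ G` equals `End_{L^G}(L)` (the centralizer of the fixed field in `End_K(L)`);
in particular it is a simple algebra whose center is `L^G`. -/
theorem stmt9 (K L : Type*) [Field K] [Field L] [Algebra K L] [FiniteDimensional K L] :
    skewGroupAlg K L =
      Subalgebra.centralizer K (Algebra.lmul K L ''
        ((IntermediateField.fixedField (⊤ : Subgroup (L ≃ₐ[K] L))) : Set L)) ∧
    IsSimpleRing (skewGroupAlg K L) ∧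
    {f : Module.End K L | f ∈ skewGroupAlg K L ∧ ∀ g ∈ skewGroupAlg K L, f * g = g * f} =
      Algebra.lmul K L ''
        ((IntermediateField.fixedField (⊤ : Subgroup (L ≃ₐ[K] L))) : Set L) :=
  ⟨(skewGroupAlg_eq_range K L).trans (centralizer_lmul_eq_range _).symm,
    isSimpleRing_skewGroupAlg K L, center_skewGroupAlg K L⟩
end

section
/- A finite field extension L/K is Galois if and only if the subalgebra of End_K(L) generated by L (via multiplications) and Aut_K(L) equals all of End_K(L). -/
/-!
If `L/K` is Galois, Dedekind's lemma makes the `[L:K]` automorphisms `L`-linearly independent in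
`End_K(L)`, which has `L`-dimension `[L:K]`; so they span it over `L`, and scaling by `a ∈ L` is
composition with the multiplication operator of `a`. Conversely, multiplication by an element
fixed by every automorphism commutes with all the generators, hence with all of `End_K(L)`, whose
centre is `K`; so the fixed field of `Aut_K(L)` is `K`.
-/

theorem Subalgebra.mem_center_of_mem_centralizer_of_adjoin_eq_top {R A : Type*} [CommSemiring R]
    [Semiring A] [Algebra R A] {s : Set A} (hs : Algebra.adjoin R s = ⊤) {x : A}
    (hx : x ∈ Subalgebra.centralizer R s) : x ∈ Subalgebra.center R A := by
  rw [Subalgebra.mem_center_iff]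
  intro y
  exact (Algebra.adjoin_le_centralizer_centralizer R s (hs ▸ Algebra.mem_top : y ∈ _) x hx).symm

theorem Algebra.mem_range_algebraMap_of_lmul_mem_center {K L : Type*} [Field K] [Ring L]
    [Algebra K L] {c : L} (hc : Algebra.lmul K L c ∈ Subalgebra.center K (Module.End K L)) :
    c ∈ Set.range (algebraMap K L) := by
  obtain ⟨a, ha⟩ := (Algebra.IsCentral.mem_center_iff K).1 hc
  refine ⟨a, ?_⟩
  simpa [Algebra.algebraMap_eq_smul_one] using congr($ha 1).symm

theorem Algebra.span_le_adjoin_range_lmul_union {K L : Type*} [CommSemiring K] [CommSemiring L]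
    [Algebra K L] (s : Set (Module.End K L)) :
    (Submodule.span L s : Set (Module.End K L)) ⊆
      Algebra.adjoin K (Set.range ⇑(Algebra.lmul K L) ∪ s) := by
  intro f hf
  induction hf using Submodule.span_induction with
  | mem g hg => exact Algebra.subset_adjoin (Set.mem_union_right _ hg)
  | zero => exact Subalgebra.zero_mem _
  | add f g _ _ hf hg => exact Subalgebra.add_mem _ hf hg
  | smul a f _ hf =>
    exact Subalgebra.mul_mem _
      (Algebra.subset_adjoin (Set.mem_union_left _ (Set.mem_range_self a))) hf

theorem AlgEquiv.commute_lmul_toLinearMap {K A : Type*} [CommSemiring K] [CommSemiring A]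
    [Algebra K A] (g : A ≃ₐ[K] A) {c : A} (hc : g c = c) :
    Commute (Algebra.lmul K A c) g.toLinearMap := by
  ext x
  simp [hc]

theorem IsGalois.span_toLinearMap_eq_top (K L : Type*) [Field K] [Field L] [Algebra K L]
    [FiniteDimensional K L] [IsGalois K L] :
    Submodule.span L (Set.range fun g : L ≃ₐ[K] L => (g.toLinearMap : L →ₗ[K] L)) = ⊤ := by
  have hli : LinearIndependent L (fun g : L ≃ₐ[K] L => (g.toLinearMap : L →ₗ[K] L)) :=
    (linearIndependent_toLinearMap K L L).comp (fun g : L ≃ₐ[K] L => (g : L →ₐ[K] L))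
      fun _ _ h => AlgEquiv.ext fun x => congr($h x)
  refine hli.span_eq_top_of_card_eq_finrank ?_
  rw [Module.finrank_linearMap_self, ← Nat.card_eq_fintype_card, IsGalois.card_aut_eq_finrank]

theorem lmul_mem_centralizer_of_mem_fixedField {K L : Type*} [Field K] [Field L] [Algebra K L]
    {c : L} (hc : c ∈ IntermediateField.fixedField (⊤ : Subgroup (L ≃ₐ[K] L))) :
    Algebra.lmul K L c ∈ Subalgebra.centralizer K (Set.range ⇑(Algebra.lmul K L) ∪
      Set.range fun g : L ≃ₐ[K] L => (g.toLinearMap : L →ₗ[K] L)) := by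
  rintro _ (⟨a, rfl⟩ | ⟨g, rfl⟩)
  · exact ((Commute.all a c).map (Algebra.lmul K L)).eq
  · exact (g.commute_lmul_toLinearMap (hc ⟨g, trivial⟩)).eq.symm

/-- A finite field extension `L/K` is Galois if and only if the subalgebra of
`End_K(L)` generated by the multiplication operators and `Aut_K(L)` is all of
`End_K(L)`. -/
theorem stmt10 (K L : Type*) [Field K] [Field L] [Algebra K L] [FiniteDimensional K L] :
    IsGalois K L ↔
      Algebra.adjoin K (Set.range ⇑(Algebra.lmul K L) ∪
        Set.range fun g : L ≃ₐ[K] L => (g.toLinearMap : L →ₗ[K] L)) = ⊤ := by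
  constructor
  · intro _
    refine eq_top_iff.2 fun f _ => Algebra.span_le_adjoin_range_lmul_union _ ?_
    rw [IsGalois.span_toLinearMap_eq_top]
    exact Submodule.mem_top
  · intro h
    refine IsGalois.of_fixedField_eq_bot _ _ (eq_bot_iff.2 fun c hc => ?_)
    have hcentral := Subalgebra.mem_center_of_mem_centralizer_of_adjoin_eq_top h
      (lmul_mem_centralizer_of_mem_fixedField hc)
    exact IntermediateField.mem_bot.2 (Algebra.mem_range_algebraMap_of_lmul_mem_center hcentral)
end

section
/- Let L/K be a finite field extension. Every subalgebra of End_K(L) containing L and contained in L ⋊ Aut_K(L) is of the form L ⋊ H = ⊕_{h∈H} L·h for a unique subgroup H of Aut_K(L). -/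
section

variable {K V L ι : Type*} [Field K] [AddCommGroup V] [Module K V] [Field L] [Algebra K L]
  [Fintype ι]

theorem LinearIndependent.span_range_eval_eq_top {f : ι → V →ₗ[K] L}
    (hf : LinearIndependent L f) :
    Submodule.span L (Set.range fun v i => f i v) = ⊤ := by
  classical
  by_contra hne
  obtain ⟨φ, hφ, hle⟩ := Submodule.exists_le_ker_of_lt_top _ (lt_top_iff_ne_top.mpr hne)
  set μ : ι → L := fun i => φ fun j => if i = j then 1 else 0
  have hμ : ∑ i, μ i • f i = 0 := by
    ext v
    have := hle (Submodule.subset_span ⟨v, rfl⟩)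
    rw [LinearMap.mem_ker, LinearMap.pi_apply_eq_sum_univ] at this
    simpa [μ, mul_comm] using this
  have hμ0 : ∀ i, μ i = 0 := Fintype.linearIndependent_iff.mp hf μ hμ
  refine hφ (LinearMap.ext fun x => ?_)
  rw [LinearMap.pi_apply_eq_sum_univ φ x, LinearMap.zero_apply]
  exact Finset.sum_eq_zero fun i _ => by rw [show φ _ = μ i from rfl, hμ0, smul_zero]

end

section

variable {K L : Type*} [Field K] [Field L] [Algebra K L]

theorem Algebra.lmul_mul_eq_smul (a : L) (f : Module.End K L) :
    Algebra.lmul K L a * f = a • f := by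
  ext x; simp

namespace AlgEquiv

theorem linearIndependent_toLinearMap :
    LinearIndependent L fun g : L ≃ₐ[K] L => (g.toLinearMap : L →ₗ[K] L) := by
  simpa only [Function.comp_def, AlgEquiv.toAlgHom_toLinearMap] using
    (linearIndependent_algHom_toLinearMap K L L).comp _ AlgEquiv.coe_toAlgHom_injective

theorem toLinearMap_mem_span_image_iff {g : L ≃ₐ[K] L} {s : Set (L ≃ₐ[K] L)} :
    g.toLinearMap ∈
        Submodule.span L ((fun g : L ≃ₐ[K] L => (g.toLinearMap : L →ₗ[K] L)) '' s) ↔ g ∈ s :=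
  ⟨fun h => by_contra fun hg => linearIndependent_toLinearMap.notMem_span_image hg h,
    fun hg => Submodule.subset_span ⟨g, hg, rfl⟩⟩

theorem toLinearMap_mul_smul (g : L ≃ₐ[K] L) (a : L) (f : Module.End K L) :
    g.toLinearMap * (a • f) = g a • (g.toLinearMap * f) := by
  ext x; simp

theorem toLinearMap_mul_lmul (g : L ≃ₐ[K] L) (x : L) :
    g.toLinearMap * Algebra.lmul K L x = g x • g.toLinearMap := by
  ext y; simp

end AlgEquiv

open AlgEquiv

theorem coe_skewGroupAlg_subset_span :
    (skewGroupAlg K L : Set (Module.End K L)) ⊆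
      Submodule.span L (Set.range fun g : L ≃ₐ[K] L => (g.toLinearMap : L →ₗ[K] L)) := by
  set S := Submodule.span L (Set.range fun g : L ≃ₐ[K] L => (g.toLinearMap : L →ₗ[K] L))
  have hone : (1 : Module.End K L) ∈ S := Submodule.subset_span ⟨1, rfl⟩
  have hmul_aut : ∀ g : L ≃ₐ[K] L, ∀ y ∈ S, g.toLinearMap * y ∈ S := by
    intro g y hy
    induction hy using Submodule.span_induction with
    | mem y hy =>
      obtain ⟨h, rfl⟩ := hy
      exact Submodule.subset_span ⟨g * h, rfl⟩
    | zero => simpa only [mul_zero] using S.zero_mem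
    | add y z _ _ hy hz => rw [mul_add]; exact S.add_mem hy hz
    | smul a y _ hy => rw [toLinearMap_mul_smul]; exact S.smul_mem _ hy
  intro x hx
  suffices ∀ y ∈ S, x * y ∈ S by simpa only [mul_one, SetLike.mem_coe] using this 1 hone
  induction hx using Algebra.adjoin_induction with
  | mem x hx =>
    rcases hx with ⟨a, rfl⟩ | ⟨g, rfl⟩
    · intro y hy; rw [Algebra.lmul_mul_eq_smul]; exact S.smul_mem a hy
    · exact hmul_aut g
  | algebraMap c =>
    intro y hy
    rw [Algebra.algebraMap_eq_smul_one, smul_mul_assoc, one_mul]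
    exact S.smul_of_tower_mem c hy
  | add x₁ x₂ _ _ h₁ h₂ => intro y hy; rw [add_mul]; exact S.add_mem (h₁ y hy) (h₂ y hy)
  | mul x₁ x₂ _ _ h₁ h₂ => intro y hy; rw [mul_assoc]; exact h₁ _ (h₂ y hy)

namespace Subalgebra

variable (B : Subalgebra K (Module.End K L))

def toSubmoduleOfLmul (hLB : (Algebra.lmul K L).range ≤ B) :
    Submodule L (Module.End K L) where
  carrier := B
  add_mem' := B.add_mem
  zero_mem' := B.zero_mem
  smul_mem' a f hf := by
    rw [← Algebra.lmul_mul_eq_smul]; exact B.mul_mem (hLB ⟨a, rfl⟩) hf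

@[simp]
theorem mem_toSubmoduleOfLmul (hLB : (Algebra.lmul K L).range ≤ B) {f : Module.End K L} :
    f ∈ B.toSubmoduleOfLmul hLB ↔ f ∈ B :=
  Iff.rfl

theorem smul_toLinearMap_mem_of_sum_mem [Fintype (L ≃ₐ[K] L)]
    (hLB : (Algebra.lmul K L).range ≤ B) {a : (L ≃ₐ[K] L) → L}
    (ha : ∑ g, a g • g.toLinearMap ∈ B) (g₀ : L ≃ₐ[K] L) : a g₀ • g₀.toLinearMap ∈ B := by
  classical
  set Ψ := Fintype.linearCombination L fun g : L ≃ₐ[K] L => a g • g.toLinearMap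
  have hΨ : ∀ x : L, Ψ (fun g => g x) = (∑ g, a g • g.toLinearMap) * Algebra.lmul K L x := by
    intro x
    rw [Fintype.linearCombination_apply, Finset.sum_mul]
    exact Finset.sum_congr rfl fun g _ => by
      rw [smul_mul_assoc, toLinearMap_mul_lmul, smul_comm]
  have htop : (B.toSubmoduleOfLmul hLB).comap Ψ = ⊤ := by
    rw [eq_top_iff, ← linearIndependent_toLinearMap.span_range_eval_eq_top, Submodule.span_le]
    rintro _ ⟨x, rfl⟩
    show Ψ (fun g => g x) ∈ B
    rw [hΨ]; exact B.mul_mem ha (hLB ⟨x, rfl⟩)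
  have : Pi.single g₀ 1 ∈ (B.toSubmoduleOfLmul hLB).comap Ψ := htop ▸ Submodule.mem_top
  simpa [Ψ, Fintype.linearCombination_apply, Pi.single_apply] using this

def algEquivSubgroup [Finite (L ≃ₐ[K] L)] : Subgroup (L ≃ₐ[K] L) where
  toSubmonoid := B.toSubmonoid.comap (AlgEquiv.toLinearMapHom K L)
  inv_mem' {g} hg := by
    have : g⁻¹ ∈ Submonoid.powers g :=
      (isOfFinOrder_of_finite g).mem_powers_iff_mem_zpowers.mpr (inv_mem (Subgroup.mem_zpowers g))
    exact Submonoid.powers_le.mpr hg this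

theorem mem_algEquivSubgroup [Finite (L ≃ₐ[K] L)] {g : L ≃ₐ[K] L} :
    g ∈ B.algEquivSubgroup ↔ g.toLinearMap ∈ B :=
  Iff.rfl

theorem coe_eq_span_algEquivSubgroup [Fintype (L ≃ₐ[K] L)]
    (hLB : (Algebra.lmul K L).range ≤ B) (hBG : B ≤ skewGroupAlg K L) :
    (B : Set (Module.End K L)) = Submodule.span L
      ((fun g : L ≃ₐ[K] L => (g.toLinearMap : L →ₗ[K] L)) '' B.algEquivSubgroup) := by
  refine subset_antisymm (fun f hf => ?_) ?_
  · obtain ⟨a, rfl⟩ :=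
      (Submodule.mem_span_range_iff_exists_fun L).mp (coe_skewGroupAlg_subset_span (hBG hf))
    refine Submodule.sum_mem _ fun g _ => ?_
    by_cases hag : a g = 0
    · simp [hag]
    · have hg : g.toLinearMap ∈ B := by
        simpa [smul_smul, inv_mul_cancel₀ hag] using
          (B.toSubmoduleOfLmul hLB).smul_mem (a g)⁻¹ (B.smul_toLinearMap_mem_of_sum_mem hLB hf g)
      exact Submodule.smul_mem _ _ <|
        Submodule.subset_span ⟨g, B.mem_algEquivSubgroup.mpr hg, rfl⟩
  · refine (Submodule.span_le (p := B.toSubmoduleOfLmul hLB)).mpr ?_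
    rintro _ ⟨g, hg, rfl⟩
    exact hg

end Subalgebra

end

/-- Every subalgebra of `End_K(L)` containing `L` (via multiplications) and contained
in `L ⋊ Aut_K(L)` is of the form `L ⋊ H = ⊕_{h ∈ H} L·h` for a unique subgroup `H`
of `Aut_K(L)`. -/
theorem stmt11 (K L : Type*) [Field K] [Field L] [Algebra K L] [FiniteDimensional K L]
    (B : Subalgebra K (Module.End K L)) (hLB : (Algebra.lmul K L).range ≤ B)
    (hBG : B ≤ skewGroupAlg K L) :
    ∃! H : Subgroup (L ≃ₐ[K] L),
      (B : Set (Module.End K L)) =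
        (Submodule.span L ((fun g : L ≃ₐ[K] L => (g.toLinearMap : L →ₗ[K] L)) ''
          (H : Set (L ≃ₐ[K] L))) : Set (L →ₗ[K] L)) := by
  refine ⟨B.algEquivSubgroup, B.coe_eq_span_algEquivSubgroup hLB hBG, fun H hH => ?_⟩
  ext g
  rw [B.mem_algEquivSubgroup, ← SetLike.mem_coe, ← AlgEquiv.toLinearMap_mem_span_image_iff,
    ← SetLike.mem_coe, ← hH, SetLike.mem_coe]
end

section
/- Let L/K be a finite purely inseparable field extension in characteristic p > 0. Then the algebra of K-linear differential operators D(L/K) on L equals all of End_K(L). -/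
/-- The filtration of Grothendieck differential operators on the `K`-algebra `L`:
`D_0` is the set of multiplication operators and
`D_{i+1} = {δ : [δ, l·] ∈ D_i for all l ∈ L}`. -/
def diffOpFil (K L : Type*) [Field K] [Field L] [Algebra K L] :
    ℕ → Set (Module.End K L)
  | 0 => Set.range ⇑(Algebra.lmul K L)
  | n + 1 =>
      {δ | ∀ l : L, δ * Algebra.lmul K L l - Algebra.lmul K L l * δ ∈ diffOpFil K L n}

/-- The algebra `D(L/K)` of Grothendieck differential operators on `L` over `K`,
as a subset of `End_K(L)`: the union of the filtration `diffOpFil`. -/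
def diffOps (K L : Type*) [Field K] [Field L] [Algebra K L] : Set (Module.End K L) :=
  ⋃ n, diffOpFil K L n

/-! For `l ∈ L` pick `n` with `l ^ p ^ n ∈ K`; in characteristic `p` the operator
`ad (l·)` on `End_K(L)` satisfies `ad (l·) ^ p ^ n = ad (l ^ p ^ n ·) = 0`. By Engel's theorem
`End_K(L)` is therefore a nilpotent Lie module over the abelian Lie algebra of multiplication
operators, i.e. its upper central series reaches `End_K(L)`. The recursion defining
`D_{k+1}` from `D_k` is, up to sign, the normalizer condition defining that series, so its
`k`-th term lies in `D_k`. -/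

section

attribute [local instance 100] LieRing.ofAssociativeRing

open LieAlgebra LieModule

theorem LieAlgebra.ad_pow_expChar_pow {K A : Type*} [Field K] [Ring A] [Algebra K A]
    [Nontrivial A] (p : ℕ) [ExpChar K p] (a : A) (n : ℕ) :
    ad K A a ^ p ^ n = ad K A (a ^ p ^ n) := by
  have := expChar_of_injective_algebraMap (algebraMap K (Module.End K A)).injective p
  simp only [ad_eq_lmul_left_sub_lmul_right, Pi.sub_apply, ← LinearMap.pow_mulLeft,
    ← LinearMap.pow_mulRight]
  exact sub_pow_expChar_pow_of_commute _ _ (LinearMap.commute_mulLeft_right a a)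

theorem LieAlgebra.isNilpotent_ad_of_pow_mem_center {K A : Type*} [Field K] [Ring A]
    [Algebra K A] [Nontrivial A] (p : ℕ) [ExpChar K p] {a : A} {n : ℕ}
    (ha : a ^ p ^ n ∈ Set.center A) : IsNilpotent (ad K A a) := by
  refine ⟨p ^ n, ?_⟩
  ext x
  rw [ad_pow_expChar_pow, ad_apply, LieRing.of_associative_ring_bracket,
    Semigroup.mem_center_iff.mp ha x, sub_self, LinearMap.zero_apply]

variable (K L : Type*) [Field K] [Field L] [Algebra K L]

def mulOperators : LieSubalgebra K (Module.End K L) :=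
  (Algebra.lmul K L).toLieHom.range

theorem ucs_subset_diffOpFil (k : ℕ) :
    ((⊥ : LieSubmodule K (mulOperators K L) (Module.End K L)).ucs k : Set (Module.End K L)) ⊆
      diffOpFil K L k := by
  induction k with
  | zero =>
    intro δ hδ
    rw [LieSubmodule.ucs_zero, SetLike.mem_coe, LieSubmodule.mem_bot] at hδ
    exact ⟨0, by rw [map_zero, hδ]⟩
  | succ k ih =>
    intro δ hδ l
    rw [LieSubmodule.ucs_succ, SetLike.mem_coe, LieSubmodule.mem_normalizer] at hδ
    apply ih
    have := neg_mem (hδ ⟨Algebra.lmul K L l, l, rfl⟩)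
    rwa [LieSubalgebra.coe_bracket_of_module, LieRing.of_associative_ring_bracket, neg_sub] at this

theorem isNilpotent_mulOperators [FiniteDimensional K L] (p : ℕ) [ExpChar K p]
    [IsPurelyInseparable K L] :
    LieModule.IsNilpotent (mulOperators K L) (Module.End K L) := by
  refine (isNilpotent_iff_forall' (R := K)).mpr fun ⟨_, l, rfl⟩ => ?_
  obtain ⟨n, c, hc⟩ := IsPurelyInseparable.pow_mem K p l
  rw [LieSubalgebra.toEnd_eq]
  refine isNilpotent_ad_of_pow_mem_center p (n := n) ?_
  change Algebra.lmul K L l ^ p ^ n ∈ _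
  rw [← map_pow, ← hc, AlgHom.commutes]
  exact Set.algebraMap_mem_center c

end

/-- For a finite purely inseparable extension `L/K` in characteristic `p > 0`,
the algebra of differential operators `D(L/K)` is all of `End_K(L)`. -/
theorem stmt12 (K L : Type*) [Field K] [Field L] [Algebra K L] [FiniteDimensional K L]
    (p : ℕ) (hp : p.Prime) [CharP K p] [IsPurelyInseparable K L] :
    diffOps K L = Set.univ := by
  have : ExpChar K p := ExpChar.prime hp
  obtain ⟨k, hk⟩ :=
    (LieModule.isNilpotent_iff_exists_ucs_eq_top K).mp (isNilpotent_mulOperators K L p)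
  refine Set.eq_univ_of_forall fun δ => Set.mem_iUnion.mpr ⟨k, ucs_subset_diffOpFil K L k ?_⟩
  rw [hk]
  trivial
end

section
/- Let L/K be a finite field extension in characteristic p > 0 and n = [L:K]. Then D(L/K) = End_K(L) if and only if the extension L/K is purely inseparable. -/
open Polynomial

section Commutator

variable {R A : Type*} [CommRing R] [Ring A] [Algebra R A]

theorem commutator_aeval (δ u : A) (h : Commute u (δ * u - u * δ)) (g : R[X]) :
    δ * aeval u g - aeval u g * δ = aeval u (derivative g) * (δ * u - u * δ) := by
  induction g using Polynomial.induction_on with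
  | C c => simp [Algebra.commutes]
  | add g g' hg hg' =>
    simp only [map_add, add_mul, ← hg, ← hg']
    noncomm_ring
  | monomial k c hk =>
    set P := aeval u (C c * X ^ k)
    set Q := aeval u (derivative (C c * X ^ k))
    have hX : (C c * X ^ (k + 1) : R[X]) = C c * X ^ k * X := by ring
    have hP : aeval u (C c * X ^ (k + 1)) = P * u := by rw [hX, map_mul, aeval_X]
    have hQ : aeval u (derivative (C c * X ^ (k + 1))) = Q * u + P := by
      rw [hX, derivative_mul, derivative_X, mul_one, map_add, map_mul, aeval_X]
    rw [hP, hQ]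
    calc δ * (P * u) - P * u * δ = (δ * P - P * δ) * u + P * (δ * u - u * δ) := by noncomm_ring
      _ = (Q * u + P) * (δ * u - u * δ) := by rw [hk, mul_assoc, ← h.eq, add_mul, mul_assoc]

end Commutator

section

variable {K L : Type*} [Field K] [Field L] [Algebra K L]

variable (K L) in
noncomputable def adLmul (l : L) : Module.End K (Module.End K L) :=
  LinearMap.mulRight K (Algebra.lmul K L l) - LinearMap.mulLeft K (Algebra.lmul K L l)

theorem mem_diffOpFil_succ {n : ℕ} {δ : Module.End K L} :
    δ ∈ diffOpFil K L (n + 1) ↔ ∀ l, adLmul K L l δ ∈ diffOpFil K L n := Iff.rfl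

variable (K L) in
noncomputable def diffOpFilSubmodule : ℕ → Submodule K (Module.End K L)
  | 0 => LinearMap.range (Algebra.lmul K L).toLinearMap
  | n + 1 => ⨅ l, (diffOpFilSubmodule n).comap (adLmul K L l)

theorem mem_diffOpFilSubmodule {n : ℕ} {δ : Module.End K L} :
    δ ∈ diffOpFilSubmodule K L n ↔ δ ∈ diffOpFil K L n := by
  induction n generalizing δ with
  | zero => rfl
  | succ n ih => simp [diffOpFilSubmodule, Submodule.mem_iInf, ih, mem_diffOpFil_succ]

theorem zero_mem_diffOpFil (n : ℕ) : (0 : Module.End K L) ∈ diffOpFil K L n :=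
  mem_diffOpFilSubmodule.1 (zero_mem _)

theorem commute_lmul_of_mem_diffOpFil {x : L} (hx : IsSeparable K x) :
    ∀ {n : ℕ} {δ : Module.End K L}, δ ∈ diffOpFil K L n → Commute δ (Algebra.lmul K L x)
  | 0, _, ⟨y, rfl⟩ => by rw [Commute, SemiconjBy, ← map_mul, ← map_mul, mul_comm]
  | n + 1, δ, hδ => by
    set u := Algebra.lmul K L x
    have he : Commute u (adLmul K L x δ) := (commute_lmul_of_mem_diffOpFil hx (hδ x)).symm
    have key := commutator_aeval δ u he (minpoly K x)
    rw [Polynomial.aeval_algHom_apply, Polynomial.aeval_algHom_apply, minpoly.aeval, map_zero,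
      mul_zero, zero_mul, sub_zero, eq_comm] at key
    have hunit : IsUnit (Algebra.lmul K L (aeval x (derivative (minpoly K x)))) :=
      (Ne.isUnit (hx.aeval_derivative_ne_zero (minpoly.aeval K x))).map _
    exact sub_eq_zero.1 ((hunit.mul_right_eq_zero).1 key)

theorem mem_range_algebraMap_of_forall_commute_lmul {x : L}
    (h : ∀ f : Module.End K L, Commute f (Algebra.lmul K L x)) :
    x ∈ (algebraMap K L).range := by
  obtain ⟨α, _, hα⟩ := Module.End.mem_center_iff.1 (Semigroup.mem_center_iff.2 fun f ↦ (h f).eq)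
  refine ⟨α, ?_⟩
  simpa [Algebra.smul_def] using (LinearMap.congr_fun hα 1).symm

theorem isPurelyInseparable_of_diffOps_eq_univ [Algebra.IsIntegral K L]
    (h : diffOps K L = Set.univ) : IsPurelyInseparable K L := by
  refine isPurelyInseparable_iff.2 fun x ↦ ⟨Algebra.IsIntegral.isIntegral x, fun hx ↦ ?_⟩
  refine mem_range_algebraMap_of_forall_commute_lmul fun f ↦ ?_
  obtain ⟨n, hn⟩ := Set.mem_iUnion.1 (Set.eq_univ_iff_forall.1 h f)
  exact commute_lmul_of_mem_diffOpFil hx hn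

theorem adLmul_commute (x y : L) : Commute (adLmul K L x) (adLmul K L y) := by
  have hxy : Commute (Algebra.lmul K L x) (Algebra.lmul K L y) := (Commute.all x y).map _
  have hR : Commute (LinearMap.mulRight K (Algebra.lmul K L x))
      (LinearMap.mulRight K (Algebra.lmul K L y)) := by
    ext δ : 1
    simp only [Module.End.mul_apply, LinearMap.mulRight_apply, mul_assoc, hxy.eq]
  have hL : Commute (LinearMap.mulLeft K (Algebra.lmul K L x))
      (LinearMap.mulLeft K (Algebra.lmul K L y)) :=
    hxy.map (Algebra.lmul K (Module.End K L))
  exact (hR.sub_right (LinearMap.commute_mulLeft_right _ _).symm).sub_left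
    ((LinearMap.commute_mulLeft_right _ _).sub_right (R := Module.End K (Module.End K L)) hL)

theorem adLmul_pow_eq_zero (q : ℕ) [ExpChar K q] {y : L} {e : ℕ}
    (hy : y ^ q ^ e ∈ (algebraMap K L).range) : adLmul K L y ^ q ^ e = 0 := by
  obtain ⟨c, hc⟩ := hy
  have : ExpChar (Module.End K (Module.End K L)) q :=
    expChar_of_injective_algebraMap (algebraMap K _).injective q
  rw [adLmul, sub_pow_expChar_pow_of_commute (R := Module.End K (Module.End K L)) q e
      (LinearMap.commute_mulLeft_right _ _).symm, LinearMap.pow_mulRight, LinearMap.pow_mulLeft, ← map_pow, ← hc, AlgHom.commutes, sub_eq_zero]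
  ext δ : 1
  exact (Algebra.commutes c δ).symm

theorem mem_diffOpFil_succ_of_basis {ι : Type*} (b : Module.Basis ι K L) {n : ℕ}
    {δ : Module.End K L} (h : ∀ i, adLmul K L (b i) δ ∈ diffOpFil K L n) :
    δ ∈ diffOpFil K L (n + 1) := by
  have : Submodule.span K (Set.range b) ≤
      (diffOpFilSubmodule K L n).comap
        ((LinearMap.mulLeft K δ - LinearMap.mulRight K δ) ∘ₗ (Algebra.lmul K L).toLinearMap) :=
    Submodule.span_le.2 <| Set.range_subset_iff.2 fun i ↦ mem_diffOpFilSubmodule.2 (h i)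
  rw [b.span_eq] at this
  exact fun l ↦ mem_diffOpFilSubmodule.1 (this Submodule.mem_top)

theorem mem_diffOpFil_sum_of_pow_adLmul_apply_eq_zero {ι : Type*} [Fintype ι]
    (b : Module.Basis ι K L) {c : ι → ℕ} {δ : Module.End K L}
    (h : ∀ i, (adLmul K L (b i) ^ c i) δ = 0) : δ ∈ diffOpFil K L (∑ i, c i) := by
  classical
  induction hm : ∑ i, c i generalizing c δ with
  | zero =>
    obtain ⟨j⟩ := b.index_nonempty
    rw [show δ = 0 by simpa [Finset.sum_eq_zero_iff.1 hm j (Finset.mem_univ j)] using h j]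
    exact zero_mem_diffOpFil 0
  | succ m ih =>
    by_cases! h0 : ∃ j, c j = 0
    · obtain ⟨j, hj⟩ := h0
      rw [show δ = 0 by simpa [hj] using h j]
      exact zero_mem_diffOpFil _
    refine mem_diffOpFil_succ_of_basis b fun j ↦ ih (c := Function.update c j (c j - 1))
      (fun i ↦ ?_) ?_
    · rw [← Module.End.mul_apply]
      rcases eq_or_ne i j with rfl | hij
      · rw [Function.update_self, ← pow_succ, Nat.sub_one_add_one (h0 i)]
        exact h i
      · rw [Function.update_of_ne hij, ((adLmul_commute _ _).pow_left _).eq, Module.End.mul_apply,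
          h i, map_zero]
    · rw [Finset.sum_update_of_mem (Finset.mem_univ j)]
      have := Finset.sum_eq_add_sum_sdiff_singleton_of_mem (Finset.mem_univ j) c
      have := h0 j
      omega

theorem diffOps_eq_univ_of_hasExponent [FiniteDimensional K L]
    [IsPurelyInseparable.HasExponent K L] : diffOps K L = Set.univ := by
  let b := Module.finBasis K L
  let N := ringExpChar K ^ IsPurelyInseparable.exponent K L
  refine Set.eq_univ_of_forall fun δ ↦ Set.mem_iUnion.2
    ⟨∑ _i, N, mem_diffOpFil_sum_of_pow_adLmul_apply_eq_zero b (c := fun _ ↦ N) fun i ↦ ?_⟩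
  rw [adLmul_pow_eq_zero _ (IsPurelyInseparable.exponent_def K (b i)), LinearMap.zero_apply]

end

theorem stmt13_general (K L : Type*) [Field K] [Field L] [Algebra K L] [FiniteDimensional K L] :
    diffOps K L = Set.univ ↔ IsPurelyInseparable K L :=
  ⟨isPurelyInseparable_of_diffOps_eq_univ, fun _ ↦ diffOps_eq_univ_of_hasExponent⟩

/-- For a finite extension `L/K` in characteristic `p > 0`,
`D(L/K) = End_K(L)` if and only if `L/K` is purely inseparable. -/
theorem stmt13 (K L : Type*) [Field K] [Field L] [Algebra K L] [FiniteDimensional K L]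
    (p : ℕ) (hp : p.Prime) [CharP K p] :
    diffOps K L = Set.univ ↔ IsPurelyInseparable K L :=
  stmt13_general K L
end

section
/- Let L/K be a finite field extension. Then the separable closure of K in L equals the set of elements l ∈ L such that l (as a multiplication operator) commutes with every K-linear differential operator on L, i.e. L^{sep} = C_L(D(L/K)). -/
/-!
Write `ad x δ = δ ∘ (x·) - (x·) ∘ δ`, so that `δ` has order `≤ n + 1` iff every `ad x δ` has
order `≤ n`. Let `F` be the separable closure of `K` in `L`.

If every operator of order `≤ n` commutes with `F`, then for `δ` of order `≤ n + 1` the map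
`c ↦ ad c δ` is a `K`-derivation of `F` into `End_K L`; it vanishes because `F/K` is separable
(`Ω[F⁄K] = 0`), so `δ` commutes with `F` as well.

Conversely `L/F` is purely inseparable. In exponential characteristic `q`,
`(ad x) ^ q = ad (x ^ q)`, so for an `F`-basis `b` of `L` each `ad (b i)` is nilpotent on
`F`-linear operators `δ`, and `ad x δ = ∑ i, ad (b i) δ ∘ (xᵢ·)` for `x = ∑ i, xᵢ b i`. Hence
every `F`-linear endomorphism of `L` is a differential operator. If `l` commutes with an `F`-linear `π : L → F ⊆ L` with
`π 1 = 1`, then `l = π l ∈ F`.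
-/

open Algebra (lmul)

lemma Derivation.eq_zero_of_isSeparable {K F M : Type*} [Field K] [Field F] [Algebra K F]
    [Algebra.IsSeparable K F] [AddCommGroup M] [Module K M] [Module F M] [IsScalarTower K F M]
    (D : Derivation K F M) : D = 0 := by
  have := Algebra.FormallyUnramified.of_isSeparable K F
  ext x
  rw [← D.liftKaehlerDifferential_comp_D, Subsingleton.elim (KaehlerDifferential.D K F x) 0,
    map_zero, Derivation.zero_apply]

namespace DiffOp

variable {K L : Type*} [Field K] [Field L] [Algebra K L]

variable (K) in
def ad : L →ₗ[K] Module.End K (Module.End K L) where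
  toFun x := LinearMap.mulRight K (lmul K L x) - LinearMap.mulLeft K (lmul K L x)
  map_add' x y := by
    ext δ : 1
    simp only [map_add, LinearMap.add_apply, LinearMap.sub_apply, LinearMap.mulRight_apply,
      LinearMap.mulLeft_apply, mul_add, add_mul]
    abel
  map_smul' k x := by
    ext δ : 1
    simp only [map_smul, LinearMap.smul_apply, LinearMap.sub_apply, LinearMap.mulRight_apply,
      LinearMap.mulLeft_apply, mul_smul_comm, smul_mul_assoc, smul_sub, RingHom.id_apply]

lemma ad_eq (x : L) :
    ad K x = LinearMap.mulRight K (lmul K L x) - LinearMap.mulLeft K (lmul K L x) := rfl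

lemma ad_apply (x : L) (δ : Module.End K L) :
    ad K x δ = δ * lmul K L x - lmul K L x * δ := rfl

lemma ad_apply_eq_zero_iff {x : L} {δ : Module.End K L} :
    ad K x δ = 0 ↔ Commute (lmul K L x) δ := by
  rw [ad_apply, sub_eq_zero, eq_comm]; rfl

lemma commute_lmul (x y : L) : Commute (lmul K L x) (lmul K L y) := by
  simp only [Commute, SemiconjBy, ← map_mul, mul_comm]

lemma commute_lmul_ad {x c : L} {δ : Module.End K L} (h : Commute (lmul K L c) δ) :
    Commute (lmul K L c) (ad K x δ) := by
  rw [ad_apply]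
  exact (h.mul_right (commute_lmul c x)).sub_right ((commute_lmul c x).mul_right h)

lemma ad_one : ad K (1 : L) = 0 := by
  ext δ : 1
  rw [ad_apply, map_one, mul_one, one_mul, sub_self, LinearMap.zero_apply]

lemma ad_mul (x y : L) (δ : Module.End K L) :
    ad K (x * y) δ = ad K x δ * lmul K L y + lmul K L x * ad K y δ := by
  simp only [ad_apply, map_mul, sub_mul, mul_sub, mul_assoc]
  abel

lemma ad_mul_lmul (x c : L) (δ : Module.End K L) :
    ad K x (δ * lmul K L c) = ad K x δ * lmul K L c := by
  simp only [ad_apply, sub_mul, mul_assoc, commute_lmul c x |>.eq]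

lemma commute_ad (x y : L) : Commute (ad K x) (ad K y) := by
  ext δ : 1
  simp only [Module.End.mul_apply, ad_apply, mul_sub, sub_mul, mul_assoc, commute_lmul y x |>.eq]
  simp only [← mul_assoc, commute_lmul y x |>.eq]
  abel

lemma ad_pow_expChar_pow (r m : ℕ) [ExpChar K r] (x : L) :
    ad K x ^ r ^ m = ad K (x ^ r ^ m) := by
  have : ExpChar (Module.End K (Module.End K L)) r :=
    expChar_of_injective_algebraMap (algebraMap K _).injective r
  rw [ad_eq, ad_eq, sub_pow_expChar_pow_of_commute (R := Module.End K (Module.End K L)) r m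
    (LinearMap.commute_mulLeft_right _ _).symm, LinearMap.pow_mulRight, LinearMap.pow_mulLeft,
    ← map_pow]

lemma mem_diffOpFil_succ {n : ℕ} {δ : Module.End K L} :
    δ ∈ diffOpFil K L (n + 1) ↔ ∀ x : L, ad K x δ ∈ diffOpFil K L n := Iff.rfl

lemma mem_diffOpFil_zero_of_forall_commute {δ : Module.End K L}
    (h : ∀ x : L, Commute (lmul K L x) δ) : δ ∈ diffOpFil K L 0 := by
  refine ⟨δ 1, LinearMap.ext fun x => ?_⟩
  simpa [mul_comm (δ 1)] using congr($(h x) 1)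

lemma zero_mem_diffOpFil : ∀ n : ℕ, (0 : Module.End K L) ∈ diffOpFil K L n
  | 0 => ⟨0, map_zero _⟩
  | n + 1 => mem_diffOpFil_succ.2 fun x => by
    rw [map_zero]; exact zero_mem_diffOpFil n

lemma add_mem_diffOpFil : ∀ {n : ℕ} {δ δ' : Module.End K L},
    δ ∈ diffOpFil K L n → δ' ∈ diffOpFil K L n → δ + δ' ∈ diffOpFil K L n
  | 0, _, _, ⟨a, ha⟩, ⟨b, hb⟩ => ⟨a + b, by rw [map_add, ha, hb]⟩
  | _ + 1, _, _, hδ, hδ' => mem_diffOpFil_succ.2 fun x => by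
    rw [map_add]; exact add_mem_diffOpFil (hδ x) (hδ' x)

lemma mul_lmul_mem_diffOpFil (c : L) : ∀ {n : ℕ} {δ : Module.End K L},
    δ ∈ diffOpFil K L n → δ * lmul K L c ∈ diffOpFil K L n
  | 0, _, ⟨a, ha⟩ => ⟨a * c, by rw [map_mul, ha]⟩
  | _ + 1, _, hδ => mem_diffOpFil_succ.2 fun x => by
    rw [ad_mul_lmul]; exact mul_lmul_mem_diffOpFil c (hδ x)

/-- `F` acts on `End_K L` through the codomain, i.e. by left multiplication. -/
def adDerivation (F : IntermediateField K L) (δ : Module.End K L)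
    (h : ∀ x : L, ∀ c ∈ F, Commute (lmul K L c) (ad K x δ)) :
    Derivation K F (Module.End K L) where
  toFun c := ad K (c : L) δ
  map_add' c d := by
    change ad K ((c + d : F) : L) δ = ad K (c : L) δ + ad K (d : L) δ
    rw [IntermediateField.coe_add, map_add, LinearMap.add_apply]
  map_smul' k c := by
    change ad K ((k • c : F) : L) δ = k • ad K (c : L) δ
    rw [IntermediateField.coe_smul, map_smul, LinearMap.smul_apply]
  map_one_eq_zero' := by
    change ad K ((1 : F) : L) δ = 0
    rw [IntermediateField.coe_one, ad_one, LinearMap.zero_apply]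
  leibniz' c d := by
    change ad K ((c * d : F) : L) δ = lmul K L c * ad K (d : L) δ + lmul K L d * ad K (c : L) δ
    rw [MulMemClass.coe_mul, ad_mul, add_comm, (h c d d.2).eq]

theorem commute_lmul_of_mem_diffOpFil (F : IntermediateField K L) [Algebra.IsSeparable K F] :
    ∀ {n : ℕ} {δ : Module.End K L}, δ ∈ diffOpFil K L n → ∀ c ∈ F, Commute (lmul K L c) δ
  | 0, _, ⟨a, ha⟩, c, _ => ha ▸ commute_lmul c a
  | _ + 1, δ, hδ, c, hc => by
    have hD := (adDerivation F δ fun x =>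
      commute_lmul_of_mem_diffOpFil F (hδ x)).eq_zero_of_isSeparable
    exact ad_apply_eq_zero_iff.mp congr($hD ⟨c, hc⟩)

lemma ad_apply_eq_sum_basis {F : IntermediateField K L} {ι : Type*} [Fintype ι]
    (b : Module.Basis ι F L) {δ : Module.End K L} (hδ : ∀ c ∈ F, Commute (lmul K L c) δ)
    (x : L) : ad K x δ = ∑ i, ad K (b i) δ * lmul K L (b.repr x i) := by
  conv_lhs => rw [← b.sum_repr x]
  rw [map_sum, LinearMap.sum_apply]
  refine Finset.sum_congr rfl fun i _ => ?_
  have hc := hδ _ (b.repr x i).2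
  rw [IntermediateField.smul_def, smul_eq_mul, ad_mul, ad_apply_eq_zero_iff.mpr hc, zero_mul,
    zero_add, (commute_lmul_ad hc).eq]

theorem mem_diffOpFil_of_pow_ad_eq_zero {F : IntermediateField K L} {ι : Type*} [Fintype ι]
    (b : Module.Basis ι F L) {δ : Module.End K L} (hδ : ∀ c ∈ F, Commute (lmul K L c) δ)
    {e : ι → ℕ} (he : ∀ i, (ad K (b i) ^ (e i + 1)) δ = 0) :
    δ ∈ diffOpFil K L (∑ i, e i) := by
  classical
  induction hn : ∑ i, e i generalizing δ e with
  | zero =>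
    have hb : ∀ i, ad K (b i) δ = 0 := fun i => by
      simpa [Finset.sum_eq_zero_iff.mp hn i (Finset.mem_univ i)] using he i
    refine mem_diffOpFil_zero_of_forall_commute fun x => ad_apply_eq_zero_iff.mp ?_
    simp only [ad_apply_eq_sum_basis b hδ x, hb, zero_mul, Finset.sum_const_zero]
  | succ n ih =>
    refine mem_diffOpFil_succ.2 fun x => ?_
    rw [ad_apply_eq_sum_basis b hδ x]
    refine Finset.sum_induction _ (· ∈ diffOpFil K L n) (fun _ _ => add_mem_diffOpFil)
      (zero_mem_diffOpFil n) fun i _ => mul_lmul_mem_diffOpFil _ ?_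
    cases hi : e i with
    | zero =>
      have : ad K (b i) δ = 0 := by simpa [hi] using he i
      exact this ▸ zero_mem_diffOpFil n
    | succ k =>
      refine ih (fun c hc => commute_lmul_ad (hδ c hc)) (e := Function.update e i k)
        (fun j => ?_) ?_
      · rcases eq_or_ne j i with rfl | hj
        · rw [Function.update_self, ← Module.End.mul_apply, ← pow_succ, ← hi, he]
        · rw [Function.update_of_ne hj, ← Module.End.mul_apply, ((commute_ad _ _).pow_left _).eq,
            Module.End.mul_apply, he, map_zero]
      · have := Finset.sum_eq_add_sum_sdiff_singleton_of_mem (Finset.mem_univ i) e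
        rw [Finset.sum_update_of_mem (Finset.mem_univ i)]
        omega

lemma commute_lmul_restrictScalars {F : IntermediateField K L} (φ : L →ₗ[F] L) {c : L}
    (hc : c ∈ F) : Commute (lmul K L c) (φ.restrictScalars K) :=
  LinearMap.ext fun x => (φ.map_smul ⟨c, hc⟩ x).symm

theorem mem_diffOps_of_commute (F : IntermediateField K L) [FiniteDimensional F L]
    [IsPurelyInseparable F L] {δ : Module.End K L} (hδ : ∀ c ∈ F, Commute (lmul K L c) δ) :
    δ ∈ diffOps K L := by
  obtain ⟨r, _⟩ := ExpChar.exists K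
  have : ExpChar F r := expChar_of_injective_algebraMap (algebraMap K F).injective r
  let b := Module.finBasis F L
  choose m hm using fun i => IsPurelyInseparable.pow_mem F r (b i)
  refine Set.mem_iUnion.2 ⟨_, mem_diffOpFil_of_pow_ad_eq_zero b hδ
    (e := fun i => r ^ m i - 1) fun i => ?_⟩
  obtain ⟨c, hc⟩ := hm i
  rw [Nat.sub_add_cancel (Nat.one_le_pow _ _ (expChar_pos K r)), ad_pow_expChar_pow, ← hc,
    ad_apply_eq_zero_iff]
  exact hδ _ c.2

end DiffOp

/-- For a finite extension `L/K`, the separable closure of `K` in `L` is exactly the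
set of elements of `L` whose multiplication operator commutes with every differential
operator: `L^{sep} = C_L(D(L/K))`. -/
theorem stmt14 (K L : Type*) [Field K] [Field L] [Algebra K L] [FiniteDimensional K L] :
    (separableClosure K L : Set L) =
      {l : L | ∀ δ ∈ diffOps K L,
        Algebra.lmul K L l * δ = δ * Algebra.lmul K L l} := by
  ext l
  refine ⟨fun hl δ hδ => ?_, fun hl => ?_⟩
  · obtain ⟨n, hn⟩ := Set.mem_iUnion.1 hδ
    exact (DiffOp.commute_lmul_of_mem_diffOpFil _ hn l hl).eq
  let F := separableClosure K L
  obtain ⟨f, hf⟩ := Module.Projective.exists_dual_eq_one F (one_ne_zero : (1 : L) ≠ 0)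
  let δ : Module.End K L := (Algebra.linearMap F L ∘ₗ f).restrictScalars K
  have hδ : δ ∈ diffOps K L :=
    DiffOp.mem_diffOps_of_commute F fun _ => DiffOp.commute_lmul_restrictScalars _
  have hfl : l = f l := by simpa [δ, hf] using congr($(hl δ hδ) 1)
  exact hfl ▸ (f l).2
end

section
/- Let M and N be intermediate fields of an algebraic extension of K, with N/K a finite Galois extension. Then the compositum MN is isomorphic to M ⊗_K N as a K-algebra if and only if M ∩ N = K. -/
/-!
Since `M/K` is algebraic, linear disjointness of `M` and `N` only has to be checked on the
finite subextensions `M' ≤ M`. Each of these still meets `N` only in `K`, and for two finite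
extensions one of which is Galois, trivial intersection already gives linear disjointness
(via the restriction isomorphism `Gal(M'N/M') ≃ Gal(N/M' ⊓ N)`).
-/

namespace IntermediateField

variable {F E : Type*} [Field F] [Field E] [Algebra F E] {A B : IntermediateField F E}

theorem LinearDisjoint.of_inf_eq_bot_of_isAlgebraic [Algebra.IsAlgebraic F A]
    [IsGalois F B] [FiniteDimensional F B] (h : A ⊓ B = ⊥) : A.LinearDisjoint B := by
  rw [linearDisjoint_iff']
  refine Subalgebra.LinearDisjoint.of_linearDisjoint_finite_left _ _ fun A' hA' _ => ?_
  let A'' := Algebra.IsAlgebraic.toIntermediateField A'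
  have : FiniteDimensional F A'' := ‹Module.Finite F A'›
  have hA''B : B ⊓ A'' = ⊥ := eq_bot_iff.2 (h ▸ inf_comm A B ▸ inf_le_inf_left B hA')
  exact linearDisjoint_iff'.1 (LinearDisjoint.of_inf_eq_bot hA''B).symm

theorem LinearDisjoint.iff_inf_eq_bot_of_isAlgebraic [Algebra.IsAlgebraic F A]
    [IsGalois F B] [FiniteDimensional F B] : A.LinearDisjoint B ↔ A ⊓ B = ⊥ :=
  ⟨inf_eq_bot, of_inf_eq_bot_of_isAlgebraic⟩

end IntermediateField

/-- Let `M`, `N` be intermediate fields of an algebraic extension `Ω/K` with `N/K`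
finite Galois. Then the multiplication map `M ⊗_K N → MN` is an isomorphism (i.e.
the map `M ⊗_K N → Ω` is injective, its image being the compositum) if and only if
`M ∩ N = K`. -/
theorem stmt17 (K Ω : Type*) [Field K] [Field Ω] [Algebra K Ω] [Algebra.IsAlgebraic K Ω]
    (M N : IntermediateField K Ω) [FiniteDimensional K N] [IsGalois K N] :
    Function.Injective (Algebra.TensorProduct.productMap M.val N.val) ↔ M ⊓ N = ⊥ := by
  rw [← IntermediateField.LinearDisjoint.iff_inf_eq_bot_of_isAlgebraic,
    IntermediateField.linearDisjoint_iff', Subalgebra.linearDisjoint_iff_injective]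
  rfl
end

section
/- Let L/K be a finite field extension in characteristic p > 0. Then L/K is normal if and only if the fixed field of Aut_K(L) equals the maximal purely inseparable subextension L^{pi}. -/
/-!
Every `K`-automorphism of `L` fixes the purely inseparable elements, since a `p`-th power root is
unique; when `L/K` is normal, conversely, an element fixed by `Aut_K(L)` has all conjugates equal
to itself, so it is purely inseparable. If the fixed field is `P = L^{pi}`, then the automorphisms
of `L` over `K` and over `P` coincide, so `L/P` is Galois by Artin's theorem. Finally a normal
extension `L/P` of a purely inseparable extension `P/K` is normal over `K`: if `f` is the minimal
polynomial of `x` over `P`, some `f ^ p ^ n` has coefficients in `K`, is divisible by the minimal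
polynomial of `x` over `K`, and splits in `L`.
-/

open Polynomial IntermediateField

namespace IsPurelyInseparable

variable (F : Type*) {E : Type*} [Field F] [Field E] [Algebra F E] [IsPurelyInseparable F E]

theorem exists_pow_mem_lifts (q : ℕ) [ExpChar F q] (f : E[X]) :
    ∃ n, f ^ q ^ n ∈ lifts (algebraMap F E) := by
  have : ExpChar E q := expChar_of_injective_algebraMap (algebraMap F E).injective q
  choose e he using fun i ↦ pow_mem F q (f.coeff i)
  refine ⟨f.support.sup e, ?_⟩
  have hcoeff (i : ℕ) : f.coeff i ^ q ^ f.support.sup e ∈ (algebraMap F E).range := by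
    by_cases hi : i ∈ f.support
    · rw [← Nat.add_sub_cancel' (Finset.le_sup hi), pow_add, pow_mul]
      exact _root_.pow_mem (he i) _
    · rw [notMem_support_iff.1 hi, zero_pow (expChar_pow_pos F q _).ne']
      exact zero_mem _
  rw [← map_iterateFrobenius_expand, lifts_iff_coeff_lifts]
  intro m
  rw [coeff_map, coeff_expand (expChar_pow_pos F q _)]
  split_ifs
  · rw [iterateFrobenius_def]
    exact hcoeff _
  · rw [map_zero]
    exact zero_mem (algebraMap F E).range

end IsPurelyInseparable

theorem Normal.trans_of_isPurelyInseparable (F E K : Type*) [Field F] [Field E] [Field K]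
    [Algebra F E] [Algebra E K] [Algebra F K] [IsScalarTower F E K] [IsPurelyInseparable F E]
    [Normal E K] : Normal F K := by
  obtain ⟨q, _⟩ := ExpChar.exists F
  have := Algebra.IsAlgebraic.trans F E K
  refine normal_iff.2 fun x ↦ ⟨Algebra.IsIntegral.isIntegral x, ?_⟩
  have hx : IsIntegral E x := Normal.isIntegral ‹_› x
  obtain ⟨n, hn⟩ := IsPurelyInseparable.exists_pow_mem_lifts F q (minpoly E x)
  obtain ⟨g, hg⟩ := (mem_lifts _).1 hn
  have hqn : q ^ n ≠ 0 := (expChar_pow_pos F q n).ne'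
  have hg_ne : g ≠ 0 := by
    rintro rfl
    rw [Polynomial.map_zero, eq_comm] at hg
    exact minpoly.ne_zero hx ((pow_eq_zero_iff hqn).1 hg)
  have hgx : aeval x g = 0 := by
    rw [← aeval_map_algebraMap E, hg, map_pow, minpoly.aeval, zero_pow hqn]
  have hg_splits : (g.map (algebraMap F K)).Splits := by
    rw [IsScalarTower.algebraMap_eq F E K, ← Polynomial.map_map, hg, Polynomial.map_pow]
    exact (Normal.splits ‹_› x).pow _
  exact hg_splits.of_dvd (Polynomial.map_ne_zero hg_ne)
    (Polynomial.map_dvd _ (minpoly.dvd F x hgx))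

section FixedField

variable {K L : Type*} [Field K] [Field L] [Algebra K L]

theorem AlgHom.apply_eq_self_of_isPurelyInseparable {M : IntermediateField K L}
    [IsPurelyInseparable K M] (σ : L →ₐ[K] L) (x : M) : σ x = x :=
  DFunLike.congr_fun (Subsingleton.elim (σ.comp M.val) M.val) x

theorem IntermediateField.le_fixedField_top_of_isPurelyInseparable (M : IntermediateField K L)
    [IsPurelyInseparable K M] : M ≤ fixedField (⊤ : Subgroup (L ≃ₐ[K] L)) :=
  fun x hx σ ↦ AlgHom.apply_eq_self_of_isPurelyInseparable σ.1.toAlgHom ⟨x, hx⟩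

theorem IntermediateField.restrictScalars_fixedField_top_of_isPurelyInseparable
    (M : IntermediateField K L) [IsPurelyInseparable K M] :
    (fixedField (⊤ : Subgroup (L ≃ₐ[M] L))).restrictScalars K =
      fixedField (⊤ : Subgroup (L ≃ₐ[K] L)) := by
  ext x
  refine ⟨fun hx σ ↦ ?_, fun hx τ ↦ hx ⟨τ.1.restrictScalars K, trivial⟩⟩
  have hσ : σ.1 ∈ M.fixingSubgroup := (mem_fixingSubgroup_iff _ _).2 fun y hy ↦
    AlgHom.apply_eq_self_of_isPurelyInseparable σ.1.toAlgHom ⟨y, hy⟩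
  exact hx ⟨fixingSubgroupEquiv M ⟨σ, hσ⟩, trivial⟩

variable (K L) in
theorem IntermediateField.fixedField_top_le_perfectClosure [Normal K L] :
    fixedField (⊤ : Subgroup (L ≃ₐ[K] L)) ≤ perfectClosure K L := by
  classical
  intro x hx
  have hint : IsIntegral K x := Normal.isIntegral ‹_› x
  rw [mem_perfectClosure_iff_natSepDegree_eq_one,
    natSepDegree_eq_of_splits _ (Normal.splits ‹_› x), Finset.card_eq_one]
  refine ⟨x, Finset.ext fun y ↦ ?_⟩
  simp only [Multiset.mem_toFinset, mem_aroots, Finset.mem_singleton]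
  constructor
  · rintro ⟨-, hy⟩
    obtain ⟨σ, rfl⟩ := minpoly.exists_algEquiv_of_root' hint.isAlgebraic hy
    exact hx ⟨σ, trivial⟩
  · rintro rfl
    exact ⟨minpoly.ne_zero hint, minpoly.aeval K _⟩

end FixedField

theorem stmt19_general (K L : Type*) [Field K] [Field L] [Algebra K L] [FiniteDimensional K L] :
    Normal K L ↔
      IntermediateField.fixedField (⊤ : Subgroup (L ≃ₐ[K] L)) = perfectClosure K L := by
  refine ⟨fun _ ↦ (fixedField_top_le_perfectClosure K L).antisymm
    (le_fixedField_top_of_isPurelyInseparable _), fun h ↦ ?_⟩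
  have hbot : fixedField (⊤ : Subgroup (L ≃ₐ[perfectClosure K L] L)) = ⊥ := by
    apply restrictScalars_injective K
    rw [restrictScalars_fixedField_top_of_isPurelyInseparable, h, restrictScalars_bot_eq_self]
  have := IsGalois.of_fixedField_eq_bot _ L hbot
  exact Normal.trans_of_isPurelyInseparable K (perfectClosure K L) L

/-- A finite field extension `L/K` in characteristic `p > 0` is normal if and only if
the fixed field of `Aut_K(L)` equals the maximal purely inseparable subextension
`L^{pi}` (the relative perfect closure of `K` in `L`). -/
theorem stmt19 (K L : Type*) [Field K] [Field L] [Algebra K L] [FiniteDimensional K L]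
    (p : ℕ) (hp : p.Prime) [CharP K p] :
    Normal K L ↔
      IntermediateField.fixedField (⊤ : Subgroup (L ≃ₐ[K] L)) = perfectClosure K L :=
  stmt19_general K L
end
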